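/- Let N ≥ 1 and let b : ℝ → ℂ^N solve the Toy Model System on ℂ^N. Then the Hamiltonian H(b(t)) = Σ_{j=1}^{N} ( (1/4)|b_j(t)|⁴ − Re( conj(b_j(t))² b_{j−1}(t)² ) ) is constant in t (with the convention b₀(t) = 0). -/

import Mathlib

/-! The Toy Model System is Hamiltonian: `ḃ_j = -2i ∂H/∂(conj b_j)`. By the chain rule,
`dH/dt = ∑ j, Re (conj (2 ∂H/∂(conj b_j)) · ḃ_j) = ∑ j, Re (-i |2 ∂H/∂(conj b_j)|²) = 0`.
Writing `dH/dt` in this form needs one summation by parts in the nearest-neighbour term, whose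
boundary contributions vanish because `b₀ = b_{N+1} = 0`. -/

open scoped BigOperators

noncomputable section

/-- The right-hand side of the Toy Model System (with `b 0 = 0` by convention). -/
def toyRHS (b : ℕ → ℂ) (j : ℕ) : ℂ :=
  -Complex.I * ((‖b j‖ : ℝ) : ℂ) ^ 2 * b j +
    2 * Complex.I * (starRingEnd ℂ) (b j) * (b (j - 1) ^ 2 + b (j + 1) ^ 2)

/-- `b` solves the Toy Model System on `ℂ^N` (encoded as `b : ℝ → ℕ → ℂ` vanishing
outside indices `1,…,N`, so that `b₀ = b_{N+1} = 0` automatically). -/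
def IsToySol (N : ℕ) (b : ℝ → ℕ → ℂ) : Prop :=
  (∀ t, b t 0 = 0) ∧ (∀ t, ∀ j, N < j → b t j = 0) ∧
    ∀ j, 1 ≤ j → j ≤ N → ∀ t, HasDerivAt (fun s => b s j) (toyRHS (b t) j) t

open Complex ComplexConjugate Finset

def toyHamiltonian (N : ℕ) (z : ℕ → ℂ) : ℝ :=
  ∑ j ∈ Icc 1 N, ((1/4 : ℝ) * ‖z j‖ ^ 4 - (conj (z j) ^ 2 * z (j - 1) ^ 2).re)

/-- `toyForce z j = 2 ∂H/∂(conj z_j)`, so that the system reads `ḃ_j = -i · toyForce b j`. -/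
def toyForce (z : ℕ → ℂ) (j : ℕ) : ℂ :=
  (‖z j‖ ^ 2 : ℝ) * z j - 2 * conj (z j) * (z (j - 1) ^ 2 + z (j + 1) ^ 2)

lemma toyRHS_eq_neg_I_mul_toyForce (z : ℕ → ℂ) (j : ℕ) : toyRHS z j = -I * toyForce z j := by
  unfold toyRHS toyForce
  push_cast
  ring

lemma re_conj_mul_neg_I_mul_self (w : ℂ) : (conj w * (-I * w)).re = 0 := by
  rw [mul_left_comm, ← normSq_eq_conj_mul_self]
  simp

lemma sum_Icc_comp_pred {M : Type*} [AddCommMonoid M] {N : ℕ} {g : ℕ → M} (h0 : g 0 = 0)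
    (hN : g N = 0) : ∑ j ∈ Icc 1 N, g (j - 1) = ∑ j ∈ Icc 1 N, g j := by
  have hsucc := sum_range_succ g N
  rw [sum_range_succ', hN, h0, add_zero, add_zero] at hsucc
  rw [← Ico_add_one_right_eq_Icc, sum_Ico_eq_sum_range, sum_Ico_eq_sum_range]
  simpa [add_comm 1] using hsucc.symm

lemma hasDerivAt_toyHamiltonian_summand {f g : ℝ → ℂ} {f' g' : ℂ} {t : ℝ}
    (hf : HasDerivAt f f' t) (hg : HasDerivAt g g' t) :
    HasDerivAt (fun s => (1/4 : ℝ) * ‖f s‖ ^ 4 - (conj (f s) ^ 2 * g s ^ 2).re)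
      (‖f t‖ ^ 2 * (conj (f t) * f').re -
        (2 * conj (f t) * conj f' * g t ^ 2 + 2 * conj (f t) ^ 2 * g t * g').re) t := by
  have hquartic : HasDerivAt (fun s => (1/4 : ℝ) * ‖f s‖ ^ 4)
      ((1/4 : ℝ) * (2 * (‖f t‖ ^ 2) * (2 * (conj (f t) * f').re))) t := by
    simpa [← pow_mul, Complex.inner, mul_comm f'] using (hf.norm_sq.fun_pow 2).const_mul (1/4 : ℝ)
  have hbond : HasDerivAt (fun s => (conj (f s) ^ 2 * g s ^ 2).re) _ t :=
    reCLM.hasFDerivAt.comp_hasDerivAt t ((hf.star.fun_pow 2).fun_mul (hg.fun_pow 2))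
  refine (hquartic.sub hbond).congr_deriv ?_
  simp only [reCLM_apply, star_def, Nat.cast_ofNat]
  congr 1
  · ring
  · congr 1
    ring

/-- Summation by parts: the last two terms telescope in `∑ j ∈ Icc 1 N`. -/
lemma toyHamiltonian_summand_deriv_eq (z v : ℕ → ℂ) {j : ℕ} (hj : 1 ≤ j) :
    ‖z j‖ ^ 2 * (conj (z j) * v j).re -
        (2 * conj (z j) * conj (v j) * z (j - 1) ^ 2 +
          2 * conj (z j) ^ 2 * z (j - 1) * v (j - 1)).re =
      (conj (toyForce z j) * v j).re + (2 * conj (z (j + 1)) ^ 2 * z j * v j).re -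
        (2 * conj (z (j - 1 + 1)) ^ 2 * z (j - 1) * v (j - 1)).re := by
  rw [Nat.sub_add_cancel hj]
  simp only [toyForce, sq, map_sub, map_mul, map_add, conj_ofReal, RingHomCompTriple.comp_apply,
    RingHom.id_apply, mul_re, mul_im, add_re, add_im, sub_re, sub_im, conj_re, conj_im, ofReal_re,
    ofReal_im, re_ofNat, im_ofNat]
  ring

lemma hasDerivAt_toyHamiltonian {N : ℕ} {b : ℝ → ℕ → ℂ} {v : ℕ → ℂ} {t : ℝ}
    (h0 : b t 0 = 0) (hN : b t (N + 1) = 0) (hv : ∀ j ≤ N, HasDerivAt (fun s => b s j) (v j) t) :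
    HasDerivAt (fun s => toyHamiltonian N (b s))
      (∑ j ∈ Icc 1 N, (conj (toyForce (b t) j) * v j).re) t := by
  set g : ℕ → ℝ := fun j => (2 * conj (b t (j + 1)) ^ 2 * b t j * v j).re
  have hshift : ∑ j ∈ Icc 1 N, g (j - 1) = ∑ j ∈ Icc 1 N, g j :=
    sum_Icc_comp_pred (by simp [g, h0]) (by simp [g, hN])
  refine (HasDerivAt.fun_sum fun j hj => hasDerivAt_toyHamiltonian_summand (hv j (mem_Icc.1 hj).2)
    (hv (j - 1) ((Nat.sub_le j 1).trans (mem_Icc.1 hj).2))).congr_deriv ?_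
  rw [sum_congr rfl fun j hj => toyHamiltonian_summand_deriv_eq (b t) v (mem_Icc.1 hj).1,
    sum_sub_distrib, sum_add_distrib]
  change _ + ∑ j ∈ Icc 1 N, g j - ∑ j ∈ Icc 1 N, g (j - 1) = _
  rw [hshift, add_sub_cancel_right]

lemma IsToySol.hasDerivAt {N : ℕ} {b : ℝ → ℕ → ℂ} (hb : IsToySol N b) (t : ℝ) {j : ℕ}
    (hj : j ≤ N) : HasDerivAt (fun s => b s j) (toyRHS (b t) j) t := by
  obtain ⟨h0, -, hderiv⟩ := hb
  rcases Nat.eq_zero_or_pos j with rfl | hj0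
  · simpa [toyRHS, h0] using hasDerivAt_const t (0 : ℂ)
  · exact hderiv j hj0 hj t

lemma IsToySol.hasDerivAt_toyHamiltonian {N : ℕ} {b : ℝ → ℕ → ℂ} (hb : IsToySol N b) (t : ℝ) :
    HasDerivAt (fun s => toyHamiltonian N (b s)) 0 t := by
  simpa only [toyRHS_eq_neg_I_mul_toyForce, re_conj_mul_neg_I_mul_self, sum_const_zero] using
    _root_.hasDerivAt_toyHamiltonian (hb.1 t) (hb.2.1 t (N + 1) N.lt_succ_self) fun j hj =>
      hb.hasDerivAt t hj

theorem stmt7_general (N : ℕ) (b : ℝ → ℕ → ℂ) (hb : IsToySol N b) :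
    ∀ t s : ℝ,
      (∑ j ∈ Finset.Icc 1 N, ((1/4 : ℝ) * ‖b t j‖ ^ 4 -
        (((starRingEnd ℂ) (b t j)) ^ 2 * (b t (j - 1)) ^ 2).re)) =
      (∑ j ∈ Finset.Icc 1 N, ((1/4 : ℝ) * ‖b s j‖ ^ 4 -
        (((starRingEnd ℂ) (b s j)) ^ 2 * (b s (j - 1)) ^ 2).re)) :=
  is_const_of_deriv_eq_zero (fun t => (hb.hasDerivAt_toyHamiltonian t).differentiableAt)
    fun t => (hb.hasDerivAt_toyHamiltonian t).deriv

/-- The Hamiltonian `H(b) = Σ_j (1/4)|b_j|⁴ − Re(conj(b_j)² b_{j−1}²)` is conserved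
by the Toy Model System. -/
theorem stmt7 (N : ℕ) (hN : 1 ≤ N) (b : ℝ → ℕ → ℂ) (hb : IsToySol N b) :
    ∀ t s : ℝ,
      (∑ j ∈ Finset.Icc 1 N, ((1/4 : ℝ) * ‖b t j‖ ^ 4 -
        (((starRingEnd ℂ) (b t j)) ^ 2 * (b t (j - 1)) ^ 2).re)) =
      (∑ j ∈ Finset.Icc 1 N, ((1/4 : ℝ) * ‖b s j‖ ^ 4 -
        (((starRingEnd ℂ) (b s j)) ^ 2 * (b s (j - 1)) ^ 2).re)) :=
  stmt7_general N b hb
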